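/- (Characterization theorem) Let A ≪ B in 𝕀ℝ and let F : 𝕀_{[A,B]} → 𝕀ℝ be continuous with respect to the Moore metric d_M. Then F is integrable, i.e., ∫̲_A^B F(X)dX = ∫̄_A^B F(X)dX, and the common value satisfies ∫_A^B F(X)dX = [∫_{a̲}^{b̲} F_l(x)dx, ∫_{a̲}^{b̲} F_r(x)dx] · (d_M(A,B)/(b̲−a̲)), where F_l(x) = π₁ F([x, ā + ((b̄−ā)/(b̲−a̲))(x−a̲)]) and F_r(x) = π₂ F([x, ā + ((b̄−ā)/(b̲−a̲))(x−a̲)]). -/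

import Mathlib

/-- `𝕀ℝ`: the set of nonempty closed bounded real intervals, identified with
pairs `(lo, hi) ∈ ℝ × ℝ` with `lo ≤ hi`.  The subtype order inherited from the
product order on `ℝ × ℝ` is exactly the Kulisch–Miranker order, and the
inherited metric (sup metric of `ℝ × ℝ`) is exactly the Moore metric `d_M`. -/
abbrev IR : Type := {p : ℝ × ℝ // p.1 ≤ p.2}

namespace IR

/-- Left endpoint projection `π₁`. -/
def lo (A : IR) : ℝ := A.val.1

/-- Right endpoint projection `π₂`. -/
def hi (A : IR) : ℝ := A.val.2

/-- The strict Kulisch–Miranker order `A ≪ B`. -/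
def sll (A B : IR) : Prop := lo A < lo B ∧ hi A < hi B

/-- The Moore metric `d_M`. -/
noncomputable def dM (A B : IR) : ℝ := max |lo B - lo A| |hi B - hi A|

/-- `𝕀_{[A,B]} = {X ∈ 𝕀ℝ : A ≤ X ≤ B}`. -/
def box (A B : IR) : Set IR := {X : IR | A ≤ X ∧ X ≤ B}

/-- The interval `[u,v]` (with a junk degenerate value if `u > v`). -/
noncomputable def mkI (u v : ℝ) : IR := if h : u ≤ v then ⟨(u, v), h⟩ else ⟨(u, u), le_rfl⟩

/-- The point `A + t(B - A)` on the segment from `A` to `B`. -/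
noncomputable def seg (A B : IR) (t : ℝ) : IR :=
  mkI (lo A + t * (lo B - lo A)) (hi A + t * (hi B - hi A))

/-- Componentwise infimum of a set of intervals, as a pair of reals. -/
noncomputable def infS (S : Set IR) : ℝ × ℝ := (sInf (lo '' S), sInf (hi '' S))

/-- Componentwise supremum of a set of intervals, as a pair of reals. -/
noncomputable def supS (S : Set IR) : ℝ × ℝ := (sSup (lo '' S), sSup (hi '' S))

/-- A partition `A = P₀ ≪ P₁ ≪ ⋯ ≪ P_N = B` of `𝕀_{[A,B]}`, described by its
parameters `0 = t₀ < t₁ < ⋯ < t_N = 1` (so that `P_k = A + t_k (B - A)`). -/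
structure Partition where
  n : ℕ
  npos : 0 < n
  t : ℕ → ℝ
  t0 : t 0 = 0
  tn : t n = 1
  mono : ∀ i < n, t i < t (i + 1)

/-- The set of parameters of a partition. -/
def Partition.pts (P : Partition) : Set ℝ := P.t '' Set.Iic P.n

/-- The set of points `P_k = A + t_k(B-A)` of a partition of `𝕀_{[A,B]}`. -/
noncomputable def Partition.ipts (A B : IR) (P : Partition) : Set IR :=
  (fun i => seg A B (P.t i)) '' Set.Iic P.n

/-- Lower Riemann sum `σ(F, 𝒫)` (as a pair of reals; interval sums are
componentwise and `λ • [u,v] = [λu, λv]` for the scalars `λ = d_M ≥ 0`). -/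
noncomputable def lowerSum (A B : IR) (F : IR → IR) (P : Partition) : ℝ × ℝ :=
  ∑ k ∈ Finset.range P.n,
    dM (seg A B (P.t k)) (seg A B (P.t (k + 1))) •
      infS (F '' box (seg A B (P.t k)) (seg A B (P.t (k + 1))))

/-- Upper Riemann sum `Σ(F, 𝒫)`. -/
noncomputable def upperSum (A B : IR) (F : IR → IR) (P : Partition) : ℝ × ℝ :=
  ∑ k ∈ Finset.range P.n,
    dM (seg A B (P.t k)) (seg A B (P.t (k + 1))) •
      supS (F '' box (seg A B (P.t k)) (seg A B (P.t (k + 1))))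

/-- The lower integral `∫̲_A^B F(X)dX`: componentwise supremum of the lower
Riemann sums over all partitions. -/
noncomputable def lowerInt (A B : IR) (F : IR → IR) : ℝ × ℝ :=
  (sSup (Set.range fun P : Partition => (lowerSum A B F P).1),
   sSup (Set.range fun P : Partition => (lowerSum A B F P).2))

/-- The upper integral `∫̄_A^B F(X)dX`: componentwise infimum of the upper
Riemann sums over all partitions. -/
noncomputable def upperInt (A B : IR) (F : IR → IR) : ℝ × ℝ :=
  (sInf (Set.range fun P : Partition => (upperSum A B F P).1),
   sInf (Set.range fun P : Partition => (upperSum A B F P).2))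

/-- `F` is bounded on `𝕀_{[A,B]}` (order bounded, equivalently metrically
bounded). -/
def BoundedOn (F : IR → IR) (A B : IR) : Prop :=
  ∃ C D : IR, ∀ X ∈ box A B, C ≤ F X ∧ F X ≤ D

end IR

namespace IR

/-- The left spectrum `F_l(x) = π₁ F([x, ā + ((b̄−ā)/(b̲−a̲))(x−a̲)])`. -/
noncomputable def specL (A B : IR) (F : IR → IR) (x : ℝ) : ℝ :=
  lo (F (mkI x (hi A + ((hi B - hi A) / (lo B - lo A)) * (x - lo A))))

/-- The right spectrum `F_r(x) = π₂ F([x, ā + ((b̄−ā)/(b̲−a̲))(x−a̲)])`. -/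
noncomputable def specR (A B : IR) (F : IR → IR) (x : ℝ) : ℝ :=
  hi (F (mkI x (hi A + ((hi B - hi A) / (lo B - lo A)) * (x - lo A))))

end IR

/-!
Along the segment `t ↦ A + t(B - A)` the cell `𝕀_{[P_k, P_{k+1}]}` of a partition has Moore
diameter `d_M(P_k, P_{k+1}) = (t_{k+1} - t_k) d_M(A, B)` and contains the segment between its
corners. So, componentwise, every lower Riemann sum of `F` lies below
`d_M(A, B) ∫₀¹ F(A + t(B - A)) dt` and every upper sum above it, while uniform continuity of `F`
on the compact set `𝕀_{[A,B]}` makes the gap between the two sums small on a fine uniform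
partition. The substitution `x = a̲ + t(b̲ - a̲)` turns the integral along the segment into the
integrals of the spectra `F_l`, `F_r`.
-/

section Squeeze

variable {ι : Type*} [Nonempty ι] {L U : ι → ℝ} {I : ℝ}

lemma csSup_range_eq_of_squeeze (hL : ∀ i, L i ≤ I) (hU : ∀ i, I ≤ U i)
    (hgap : ∀ ε > 0, ∃ i, U i - L i < ε) : sSup (Set.range L) = I := by
  refine csSup_eq_of_forall_le_of_forall_lt_exists_gt (Set.range_nonempty L)
    (Set.forall_mem_range.2 hL) fun w hw => ?_
  obtain ⟨i, hi⟩ := hgap (I - w) (sub_pos.2 hw)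
  exact ⟨L i, Set.mem_range_self i, by linarith [hU i]⟩

lemma csInf_range_eq_of_squeeze (hL : ∀ i, L i ≤ I) (hU : ∀ i, I ≤ U i)
    (hgap : ∀ ε > 0, ∃ i, U i - L i < ε) : sInf (Set.range U) = I := by
  refine csInf_eq_of_forall_ge_of_forall_gt_exists_lt (Set.range_nonempty U)
    (Set.forall_mem_range.2 hU) fun w hw => ?_
  obtain ⟨i, hi⟩ := hgap (w - I) (sub_pos.2 hw)
  exact ⟨U i, Set.mem_range_self i, by linarith [hL i]⟩

end Squeeze

namespace IR

lemma lo_le_hi (X : IR) : lo X ≤ hi X := X.prop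

lemma le_iff {X Y : IR} : X ≤ Y ↔ lo X ≤ lo Y ∧ hi X ≤ hi Y := Iff.rfl

lemma dist_eq (X Y : IR) : dist X Y = max |lo X - lo Y| |hi X - hi Y| := rfl

lemma dM_eq_dist (X Y : IR) : dM X Y = dist X Y := by
  rw [dM, dist_eq, abs_sub_comm (lo X), abs_sub_comm (hi X)]

lemma dM_nonneg (X Y : IR) : 0 ≤ dM X Y := dM_eq_dist X Y ▸ dist_nonneg

lemma isCompact_box (P Q : IR) : IsCompact (box P Q) := by
  rw [Topology.IsEmbedding.subtypeVal.isCompact_iff]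
  have himg : Subtype.val '' box P Q = Set.Icc P.val Q.val ∩ {p : ℝ × ℝ | p.1 ≤ p.2} := by
    ext p
    constructor
    · rintro ⟨X, hX, rfl⟩
      exact ⟨hX, X.prop⟩
    · rintro ⟨hp, hlohi⟩
      exact ⟨⟨p, hlohi⟩, hp, rfl⟩
  rw [himg]
  exact isCompact_Icc.inter_right (isClosed_le continuous_fst continuous_snd)

lemma dist_le_of_mem_box {P Q X Y : IR} (hX : X ∈ box P Q) (hY : Y ∈ box P Q) :
    dist X Y ≤ dist P Q := by
  obtain ⟨⟨hPX₁, hPX₂⟩, ⟨hXQ₁, hXQ₂⟩⟩ := hX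
  obtain ⟨⟨hPY₁, hPY₂⟩, ⟨hYQ₁, hYQ₂⟩⟩ := hY
  rw [dist_eq, dist_eq, abs_sub_comm (lo P), abs_sub_comm (hi P)]
  exact max_le_max
    ((abs_sub_le_of_le_of_le hPX₁ hXQ₁ hPY₁ hYQ₁).trans (le_abs_self _))
    ((abs_sub_le_of_le_of_le hPX₂ hXQ₂ hPY₂ hYQ₂).trans (le_abs_self _))

lemma mkI_eq (u v : ℝ) : mkI u v = ⟨(u, max u v), le_max_left u v⟩ := by
  unfold mkI
  split_ifs with huv
  · exact Subtype.ext <| Prod.ext rfl (max_eq_right huv).symm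
  · exact Subtype.ext <| Prod.ext rfl (max_eq_left (le_of_not_ge huv)).symm

lemma continuous_mkI : Continuous fun p : ℝ × ℝ => mkI p.1 p.2 := by
  simp only [mkI_eq]
  fun_prop

section Segment

variable {A B : IR} {s t : ℝ}

lemma seg_val (ht : t ∈ Set.Icc (0 : ℝ) 1) :
    (seg A B t).val = (lo A + t * (lo B - lo A), hi A + t * (hi B - hi A)) := by
  have hv : lo A + t * (lo B - lo A) ≤ hi A + t * (hi B - hi A) := by
    nlinarith [lo_le_hi A, lo_le_hi B, ht.1, ht.2]
  rw [seg, mkI, dif_pos hv]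

lemma lo_seg (ht : t ∈ Set.Icc (0 : ℝ) 1) : lo (seg A B t) = lo A + t * (lo B - lo A) := by
  rw [lo, seg_val ht]

lemma hi_seg (ht : t ∈ Set.Icc (0 : ℝ) 1) : hi (seg A B t) = hi A + t * (hi B - hi A) := by
  rw [hi, seg_val ht]

lemma seg_zero : seg A B 0 = A :=
  Subtype.ext <| by rw [seg_val (Set.left_mem_Icc.2 zero_le_one)]; simp [lo, hi]

lemma seg_one : seg A B 1 = B :=
  Subtype.ext <| by rw [seg_val (Set.right_mem_Icc.2 zero_le_one)]; simp [lo, hi]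

lemma dist_seg (hs : s ∈ Set.Icc (0 : ℝ) 1) (ht : t ∈ Set.Icc (0 : ℝ) 1) :
    dist (seg A B s) (seg A B t) = |s - t| * dist A B := by
  rw [dist_eq, dist_eq, lo_seg hs, lo_seg ht, hi_seg hs, hi_seg ht,
    abs_sub_comm (lo A), abs_sub_comm (hi A), mul_max_of_nonneg _ _ (abs_nonneg _),
    ← abs_mul, ← abs_mul]
  congr 2 <;> ring

lemma dM_seg (hs : s ∈ Set.Icc (0 : ℝ) 1) (ht : t ∈ Set.Icc (0 : ℝ) 1) (hst : s ≤ t) :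
    dM (seg A B s) (seg A B t) = (t - s) * dM A B := by
  rw [dM_eq_dist, dM_eq_dist, dist_seg hs ht, abs_sub_comm, abs_of_nonneg (sub_nonneg.2 hst)]

lemma seg_mono (hAB : A ≤ B) (hs : s ∈ Set.Icc (0 : ℝ) 1) (ht : t ∈ Set.Icc (0 : ℝ) 1)
    (hst : s ≤ t) : seg A B s ≤ seg A B t := by
  have hlo : lo A ≤ lo B := hAB.1
  have hhi : hi A ≤ hi B := hAB.2
  rw [le_iff, lo_seg hs, lo_seg ht, hi_seg hs, hi_seg ht]
  constructor <;> nlinarith [mul_nonneg (sub_nonneg.2 hst) (sub_nonneg.2 hlo),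
    mul_nonneg (sub_nonneg.2 hst) (sub_nonneg.2 hhi)]

lemma seg_mem_box_seg (hAB : A ≤ B) {a b : ℝ} (ha : 0 ≤ a) (hb : b ≤ 1)
    (ht : t ∈ Set.Icc a b) : seg A B t ∈ box (seg A B a) (seg A B b) := by
  have hat : a ≤ 1 := ht.1.trans (ht.2.trans hb)
  have htI : t ∈ Set.Icc (0 : ℝ) 1 := ⟨ha.trans ht.1, ht.2.trans hb⟩
  exact ⟨seg_mono hAB ⟨ha, hat⟩ htI ht.1, seg_mono hAB htI ⟨ha.trans (ht.1.trans ht.2), hb⟩ ht.2⟩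

lemma seg_mem_box (hAB : A ≤ B) (ht : t ∈ Set.Icc (0 : ℝ) 1) : seg A B t ∈ box A B := by
  simpa only [seg_zero, seg_one] using seg_mem_box_seg hAB le_rfl le_rfl ht

lemma box_seg_subset (hAB : A ≤ B) {a b : ℝ} (ha : a ∈ Set.Icc (0 : ℝ) 1)
    (hb : b ∈ Set.Icc (0 : ℝ) 1) : box (seg A B a) (seg A B b) ⊆ box A B := fun _ hX =>
  ⟨(seg_mem_box hAB ha).1.trans hX.1, hX.2.trans (seg_mem_box hAB hb).2⟩

lemma continuous_seg : Continuous (seg A B) :=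
  continuous_mkI.comp (by fun_prop : Continuous fun t : ℝ =>
    (lo A + t * (lo B - lo A), hi A + t * (hi B - hi A)))

end Segment

namespace Partition

lemma monotoneOn_t (P : Partition) : MonotoneOn P.t (Set.Iic P.n) :=
  monotoneOn_of_le_add_one Set.ordConnected_Iic fun k _ _ hk => (P.mono k hk).le

lemma t_mem_Icc (P : Partition) {k : ℕ} (hk : k ≤ P.n) : P.t k ∈ Set.Icc (0 : ℝ) 1 := by
  rw [← P.t0, ← P.tn]
  exact ⟨P.monotoneOn_t (Nat.zero_le _) hk (Nat.zero_le k), P.monotoneOn_t hk Set.self_mem_Iic hk⟩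

noncomputable def uniform (n : ℕ) (hn : 0 < n) : Partition where
  n := n
  npos := hn
  t i := i / n
  t0 := by simp
  tn := div_self (Nat.cast_ne_zero.2 hn.ne')
  mono i _ := by gcongr; simp

instance : Nonempty Partition := ⟨uniform 1 one_pos⟩

lemma sum_dM_seg (P : Partition) (A B : IR) :
    ∑ k ∈ Finset.range P.n, dM (seg A B (P.t k)) (seg A B (P.t (k + 1))) = dM A B := by
  rw [Finset.sum_congr rfl fun k hk => dM_seg (P.t_mem_Icc (Finset.mem_range.1 hk).le)
    (P.t_mem_Icc (Finset.mem_range.1 hk)) (P.mono k (Finset.mem_range.1 hk)).le,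
    ← Finset.sum_mul, Finset.sum_range_sub P.t, P.tn, P.t0, sub_zero, one_mul]

end Partition

section RealSums

variable (A B : IR) (f : IR → ℝ)

noncomputable def lowerSumReal (P : Partition) : ℝ :=
  ∑ k ∈ Finset.range P.n,
    dM (seg A B (P.t k)) (seg A B (P.t (k + 1))) * sInf (f '' box (seg A B (P.t k)) (seg A B (P.t (k + 1))))

noncomputable def upperSumReal (P : Partition) : ℝ :=
  ∑ k ∈ Finset.range P.n,
    dM (seg A B (P.t k)) (seg A B (P.t (k + 1))) * sSup (f '' box (seg A B (P.t k)) (seg A B (P.t (k + 1))))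

lemma lowerInt_eq (F : IR → IR) :
    lowerInt A B F = (sSup (Set.range (lowerSumReal A B (lo ∘ F))),
      sSup (Set.range (lowerSumReal A B (hi ∘ F)))) := by
  simp only [lowerInt, lowerSum, infS, Prod.fst_sum, Prod.snd_sum, Prod.smul_fst,
    Prod.smul_snd, smul_eq_mul, ← Set.image_comp]
  rfl

lemma upperInt_eq (F : IR → IR) :
    upperInt A B F = (sInf (Set.range (upperSumReal A B (lo ∘ F))),
      sInf (Set.range (upperSumReal A B (hi ∘ F)))) := by
  simp only [upperInt, upperSum, supS, Prod.fst_sum, Prod.snd_sum, Prod.smul_fst,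
    Prod.smul_snd, smul_eq_mul, ← Set.image_comp]
  rfl

end RealSums

section Continuous

variable {A B : IR} {f : IR → ℝ}

lemma intervalIntegrable_comp_seg (hAB : A ≤ B) (hf : ContinuousOn f (box A B)) {a b : ℝ}
    (ha : a ∈ Set.Icc (0 : ℝ) 1) (hb : b ∈ Set.Icc (0 : ℝ) 1) :
    IntervalIntegrable (fun t => f (seg A B t)) MeasureTheory.volume a b :=
  (hf.comp continuous_seg.continuousOn fun _ ht => seg_mem_box hAB (Set.uIcc_subset_Icc ha hb ht)
    ).intervalIntegrable

lemma mul_integral_eq_sum (hAB : A ≤ B) (hf : ContinuousOn f (box A B)) (P : Partition) :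
    dM A B * ∫ t in (0 : ℝ)..1, f (seg A B t) =
      ∑ k ∈ Finset.range P.n, dM A B * ∫ t in P.t k..P.t (k + 1), f (seg A B t) := by
  rw [← Finset.mul_sum, intervalIntegral.sum_integral_adjacent_intervals fun k hk =>
    intervalIntegrable_comp_seg hAB hf (P.t_mem_Icc hk.le) (P.t_mem_Icc hk), P.t0, P.tn]

lemma dM_mul_sInf_le_integral (hAB : A ≤ B) (hf : ContinuousOn f (box A B)) {a b : ℝ}
    (ha : 0 ≤ a) (hab : a ≤ b) (hb : b ≤ 1) :
    dM (seg A B a) (seg A B b) * sInf (f '' box (seg A B a) (seg A B b)) ≤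
      dM A B * ∫ t in a..b, f (seg A B t) := by
  have haI : a ∈ Set.Icc (0 : ℝ) 1 := ⟨ha, hab.trans hb⟩
  have hbI : b ∈ Set.Icc (0 : ℝ) 1 := ⟨ha.trans hab, hb⟩
  have hbdd : BddBelow (f '' box (seg A B a) (seg A B b)) :=
    (isCompact_box _ _).bddBelow_image (hf.mono (box_seg_subset hAB haI hbI))
  have hint : (b - a) * sInf (f '' box (seg A B a) (seg A B b)) ≤ ∫ t in a..b, f (seg A B t) := by
    simpa using intervalIntegral.integral_mono_on hab intervalIntegrable_const
      (intervalIntegrable_comp_seg hAB hf haI hbI)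
      fun t ht => csInf_le hbdd (Set.mem_image_of_mem f (seg_mem_box_seg hAB ha hb ht))
  rw [dM_seg haI hbI hab, mul_comm (b - a), mul_assoc]
  exact mul_le_mul_of_nonneg_left hint (dM_nonneg A B)

lemma integral_le_dM_mul_sSup (hAB : A ≤ B) (hf : ContinuousOn f (box A B)) {a b : ℝ}
    (ha : 0 ≤ a) (hab : a ≤ b) (hb : b ≤ 1) :
    dM A B * ∫ t in a..b, f (seg A B t) ≤
      dM (seg A B a) (seg A B b) * sSup (f '' box (seg A B a) (seg A B b)) := by
  have haI : a ∈ Set.Icc (0 : ℝ) 1 := ⟨ha, hab.trans hb⟩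
  have hbI : b ∈ Set.Icc (0 : ℝ) 1 := ⟨ha.trans hab, hb⟩
  have hbdd : BddAbove (f '' box (seg A B a) (seg A B b)) :=
    (isCompact_box _ _).bddAbove_image (hf.mono (box_seg_subset hAB haI hbI))
  have hint : ∫ t in a..b, f (seg A B t) ≤ (b - a) * sSup (f '' box (seg A B a) (seg A B b)) := by
    simpa using intervalIntegral.integral_mono_on hab
      (intervalIntegrable_comp_seg hAB hf haI hbI) intervalIntegrable_const
      fun t ht => le_csSup hbdd (Set.mem_image_of_mem f (seg_mem_box_seg hAB ha hb ht))
  rw [dM_seg haI hbI hab, mul_comm (b - a), mul_assoc]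
  exact mul_le_mul_of_nonneg_left hint (dM_nonneg A B)

lemma lowerSumReal_le (hAB : A ≤ B) (hf : ContinuousOn f (box A B)) (P : Partition) :
    lowerSumReal A B f P ≤ dM A B * ∫ t in (0 : ℝ)..1, f (seg A B t) := by
  rw [mul_integral_eq_sum hAB hf P]
  exact Finset.sum_le_sum fun k hk => dM_mul_sInf_le_integral hAB hf
    (P.t_mem_Icc (Finset.mem_range.1 hk).le).1 (P.mono k (Finset.mem_range.1 hk)).le
    (P.t_mem_Icc (Finset.mem_range.1 hk)).2

lemma le_upperSumReal (hAB : A ≤ B) (hf : ContinuousOn f (box A B)) (P : Partition) :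
    dM A B * ∫ t in (0 : ℝ)..1, f (seg A B t) ≤ upperSumReal A B f P := by
  rw [mul_integral_eq_sum hAB hf P]
  exact Finset.sum_le_sum fun k hk => integral_le_dM_mul_sSup hAB hf
    (P.t_mem_Icc (Finset.mem_range.1 hk).le).1 (P.mono k (Finset.mem_range.1 hk)).le
    (P.t_mem_Icc (Finset.mem_range.1 hk)).2

lemma upperSumReal_sub_lowerSumReal_le (hAB : A ≤ B) (hf : ContinuousOn f (box A B))
    (P : Partition) {η : ℝ} (hη : 0 ≤ η)
    (hosc : ∀ k < P.n, ∀ X ∈ box (seg A B (P.t k)) (seg A B (P.t (k + 1))),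
      ∀ Y ∈ box (seg A B (P.t k)) (seg A B (P.t (k + 1))), dist (f X) (f Y) ≤ η) :
    upperSumReal A B f P - lowerSumReal A B f P ≤ dM A B * η := by
  rw [upperSumReal, lowerSumReal, ← Finset.sum_sub_distrib, ← P.sum_dM_seg A B, Finset.sum_mul]
  refine Finset.sum_le_sum fun k hk => ?_
  rw [Finset.mem_range] at hk
  rw [← mul_sub]
  refine mul_le_mul_of_nonneg_left ?_ (dM_nonneg _ _)
  have hK := (isCompact_box _ _).image_of_continuousOn
    (hf.mono (box_seg_subset hAB (P.t_mem_Icc hk.le) (P.t_mem_Icc hk)))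
  rw [← Real.diam_eq hK.isBounded]
  refine Metric.diam_le_of_forall_dist_le hη ?_
  rintro _ ⟨X, hX, rfl⟩ _ ⟨Y, hY, rfl⟩
  exact hosc k hk X hX Y hY

lemma exists_upperSumReal_sub_lowerSumReal_lt (hAB : A ≤ B) (hf : ContinuousOn f (box A B))
    {ε : ℝ} (hε : 0 < ε) : ∃ P, upperSumReal A B f P - lowerSumReal A B f P < ε := by
  obtain ⟨η, hη, hηε⟩ := exists_pos_mul_lt hε (dM A B)
  obtain ⟨δ, hδ, hfδ⟩ := Metric.uniformContinuousOn_iff_le.1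
    ((isCompact_box A B).uniformContinuousOn_of_continuous hf) η hη
  obtain ⟨n, hn⟩ := exists_nat_gt (dM A B / δ)
  have hn0 : 0 < n := by exact_mod_cast (div_nonneg (dM_nonneg A B) hδ.le).trans_lt hn
  have hmesh : dM A B / n ≤ δ := by
    rw [div_lt_iff₀ hδ] at hn
    rw [div_le_iff₀ (Nat.cast_pos.2 hn0)]
    linarith
  set P := Partition.uniform n hn0
  refine ⟨P, (upperSumReal_sub_lowerSumReal_le hAB hf P hη.le ?_).trans_lt hηε⟩
  intro k hk X hX Y hY
  have hkI := P.t_mem_Icc hk.le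
  have hk1I := P.t_mem_Icc hk
  refine hfδ X (box_seg_subset hAB hkI hk1I hX) Y (box_seg_subset hAB hkI hk1I hY) ?_
  calc dist X Y ≤ dist (seg A B (P.t k)) (seg A B (P.t (k + 1))) := dist_le_of_mem_box hX hY
    _ = dM A B / n := by
      rw [← dM_eq_dist, dM_seg hkI hk1I (P.mono k hk).le]
      simp only [P, Partition.uniform]
      push_cast
      ring
    _ ≤ δ := hmesh

lemma csSup_range_lowerSumReal (hAB : A ≤ B) (hf : ContinuousOn f (box A B)) :
    sSup (Set.range (lowerSumReal A B f)) = dM A B * ∫ t in (0 : ℝ)..1, f (seg A B t) :=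
  csSup_range_eq_of_squeeze (lowerSumReal_le hAB hf) (le_upperSumReal hAB hf)
    fun _ => exists_upperSumReal_sub_lowerSumReal_lt hAB hf

lemma csInf_range_upperSumReal (hAB : A ≤ B) (hf : ContinuousOn f (box A B)) :
    sInf (Set.range (upperSumReal A B f)) = dM A B * ∫ t in (0 : ℝ)..1, f (seg A B t) :=
  csInf_range_eq_of_squeeze (lowerSumReal_le hAB hf) (le_upperSumReal hAB hf)
    fun _ => exists_upperSumReal_sub_lowerSumReal_lt hAB hf

end Continuous

lemma integral_comp_seg {A B : IR} (h : lo A < lo B) (g : IR → ℝ) :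
    ∫ t in (0 : ℝ)..1, g (seg A B t) = (lo B - lo A)⁻¹ *
      ∫ x in lo A..lo B, g (mkI x (hi A + (hi B - hi A) / (lo B - lo A) * (x - lo A))) := by
  have hΔ : lo B - lo A ≠ 0 := (sub_pos.2 h).ne'
  have hseg : ∀ t, seg A B t = mkI ((lo B - lo A) * t + lo A)
      (hi A + (hi B - hi A) / (lo B - lo A) * ((lo B - lo A) * t + lo A - lo A)) := by
    intro t
    rw [seg]
    congr 1 <;> field_simp <;> ring
  simp only [hseg]
  rw [intervalIntegral.integral_comp_mul_add
    (fun x => g (mkI x (hi A + (hi B - hi A) / (lo B - lo A) * (x - lo A)))) hΔ,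
    mul_zero, zero_add, mul_one, sub_add_cancel, smul_eq_mul]

end IR

open IR in
/-- **Characterization theorem.**  Let `A ≪ B` and `F : 𝕀_{[A,B]} → 𝕀ℝ` be
continuous w.r.t. the Moore metric.  Then `F` is integrable
(`∫̲_A^B F = ∫̄_A^B F`) and
`∫_A^B F = [∫_{a̲}^{b̲} F_l, ∫_{a̲}^{b̲} F_r] · (d_M(A,B)/(b̲−a̲))`. -/
theorem IR.characterization (A B : IR) (h : sll A B) (F : IR → IR)
    (hF : ContinuousOn F (box A B)) :
    lowerInt A B F = upperInt A B F ∧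
    lowerInt A B F =
      (dM A B / (lo B - lo A)) •
        ((∫ x in lo A..lo B, specL A B F x), (∫ x in lo A..lo B, specR A B F x)) := by
  have hAB : A ≤ B := ⟨h.1.le, h.2.le⟩
  have hlo : ContinuousOn (lo ∘ F) (box A B) :=
    (continuous_fst.comp continuous_subtype_val).comp_continuousOn hF
  have hhi : ContinuousOn (hi ∘ F) (box A B) :=
    (continuous_snd.comp continuous_subtype_val).comp_continuousOn hF
  rw [lowerInt_eq, upperInt_eq, csSup_range_lowerSumReal hAB hlo, csSup_range_lowerSumReal hAB hhi,
    csInf_range_upperSumReal hAB hlo, csInf_range_upperSumReal hAB hhi,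
    integral_comp_seg h.1, integral_comp_seg h.1, div_eq_mul_inv (dM A B), Prod.smul_mk,
    smul_eq_mul, smul_eq_mul, mul_assoc, mul_assoc]
  exact ⟨rfl, rfl⟩
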